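/- Let A be a C*-algebra, E a Hilbert A-module, and T : E → E adjointable admitting a modulus R (an adjointable R : E → E with R* = R, ⟨Rx,x⟩ ≥ 0 in A for all x ∈ E, and R∘R = T*∘T). Then ‖T‖ ≤ π̃₁(T), where π̃₁(T) = sup{ ‖Σᵢ₌₁ⁿ ⟨Rxᵢ,xᵢ⟩‖ : n ∈ ℕ, x₁,…,xₙ ∈ E, μₙ(x₁,…,xₙ) ≤ 1 }. -/

import Mathlib

open scoped InnerProductSpace RightActions ENNReal

noncomputable section

/-- The older Mathlib's `CStarModule`: a right Hilbert module (action of `Aᵐᵒᵖ`), with inner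
product `A`-linear in the second variable: `⟪x, y <• a⟫ = ⟪x, y⟫ * a`. -/
class RightCStarModule (A : outParam <| Type*) (E : Type*) [NonUnitalSemiring A] [StarRing A] [Module ℂ A]
    [AddCommGroup E] [Module ℂ E] [PartialOrder A] [SMul Aᵐᵒᵖ E] [Norm A] [Norm E]
    extends Inner A E where
  inner_add_right {x} {y} {z} : inner x (y + z) = inner x y + inner x z
  inner_self_nonneg {x} : 0 ≤ inner x x
  inner_self {x} : inner x x = 0 ↔ x = 0
  inner_op_smul_right {a : A} {x y : E} : inner x (y <• a) = inner x y * a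
  inner_smul_right_complex {z : ℂ} {x} {y} : inner x (z • y) = z • inner x y
  star_inner x y : star (inner x y) = inner y x
  norm_eq_sqrt_norm_inner_self x : ‖x‖ = √‖inner x x‖

variable {A : Type*} [NonUnitalCStarAlgebra A] [PartialOrder A] [StarOrderedRing A]
variable {E : Type*} [NormedAddCommGroup E] [NormedSpace ℂ E] [SMul Aᵐᵒᵖ E]
  [RightCStarModule A E] [CompleteSpace E]
variable {F : Type*} [NormedAddCommGroup F] [NormedSpace ℂ F] [SMul Aᵐᵒᵖ F]
  [RightCStarModule A F] [CompleteSpace F]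

/-- `μₙ(x₁,…,xₙ) = sup { ‖Σᵢ ⟪xᵢ, y⟫⟪y, xᵢ⟫‖^(1/2) : y ∈ E, ‖y‖ ≤ 1 }`. -/
def mu {G : Type*} [NormedAddCommGroup G] [NormedSpace ℂ G] [SMul Aᵐᵒᵖ G]
    [RightCStarModule A G] {n : ℕ} (x : Fin n → G) : ℝ :=
  ⨆ y : {y : G // ‖y‖ ≤ 1}, Real.sqrt ‖∑ i, ⟪x i, (y : G)⟫_A * ⟪(y : G), x i⟫_A‖

/-- `π̃₂(T) = sup { ‖Σᵢ ⟪Txᵢ, Txᵢ⟫‖^(1/2) : n ∈ ℕ, μₙ(x₁,…,xₙ) ≤ 1 }` as an element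
of `[0,∞]`. -/
def piTwo {G H : Type*} [NormedAddCommGroup G] [NormedSpace ℂ G] [SMul Aᵐᵒᵖ G]
    [RightCStarModule A G] [NormedAddCommGroup H] [NormedSpace ℂ H] [SMul Aᵐᵒᵖ H]
    [RightCStarModule A H] (T : G → H) : ℝ≥0∞ :=
  ⨆ (n : ℕ) (x : Fin n → G) (_ : mu x ≤ 1),
    ENNReal.ofReal (Real.sqrt ‖∑ i, ⟪T (x i), T (x i)⟫_A‖)

/-- Given (the underlying function of) a modulus `R = |T|` of an operator `T`,
`π̃₁(T) = sup { ‖Σᵢ ⟪Rxᵢ, xᵢ⟫‖ : n ∈ ℕ, μₙ(x₁,…,xₙ) ≤ 1 }` as an element of `[0,∞]`. -/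
def piOne {G : Type*} [NormedAddCommGroup G] [NormedSpace ℂ G] [SMul Aᵐᵒᵖ G]
    [RightCStarModule A G] (R : G → G) : ℝ≥0∞ :=
  ⨆ (n : ℕ) (x : Fin n → G) (_ : mu x ≤ 1),
    ENNReal.ofReal ‖∑ i, ⟪R (x i), x i⟫_A‖

/-!
Testing `π̃₁` on a single vector `z` with `‖z‖ ≤ 1` (admissible, since `μ₁(z) ≤ ‖z‖` by the
Cauchy–Schwarz inequality) and rescaling gives `‖⟪Rz, z⟫‖ ≤ c‖z‖²` with `c = π̃₁(T)`. For a positive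
self-adjoint `R` this bounds `R` itself: with `u = ‖Rx‖x` and `v = ‖x‖Rx`, positivity of
`⟪R(u - v), u - v⟫` gives `0 ≤ 2(⟪Ru, v⟫ + ⟪Rv, u⟫) ≤ ⟪R(u + v), u + v⟫`, where the middle term is
`4‖x‖‖Rx‖⟪Rx, Rx⟫`; taking norms, `4‖x‖‖Rx‖³ ≤ 4c‖x‖²‖Rx‖²`, i.e. `‖Rx‖ ≤ c‖x‖`. Finally
`⟪Tx, Tx⟫ = ⟪x, R²x⟫ = ⟪Rx, Rx⟫`, so `‖Tx‖ = ‖Rx‖`.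
-/

section

variable {B : Type*} [NonUnitalCStarAlgebra B] [PartialOrder B]
  {G : Type*} [NormedAddCommGroup G] [NormedSpace ℂ G] [SMul Bᵐᵒᵖ G] [RightCStarModule B G]

namespace RightCStarModule

lemma inner_add_left {x y z : G} : ⟪x + y, z⟫_B = ⟪x, z⟫_B + ⟪y, z⟫_B := by
  rw [← star_inner, inner_add_right, star_add, star_inner, star_inner]

lemma inner_sub_right {x y z : G} : ⟪x, y - z⟫_B = ⟪x, y⟫_B - ⟪x, z⟫_B :=
  eq_sub_of_add_eq (by rw [← inner_add_right, sub_add_cancel])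

lemma inner_sub_left {x y z : G} : ⟪x - y, z⟫_B = ⟪x, z⟫_B - ⟪y, z⟫_B := by
  rw [← star_inner, inner_sub_right, star_sub, star_inner, star_inner]

lemma inner_op_smul_left {a : B} {x y : G} : ⟪x <• a, y⟫_B = star a * ⟪x, y⟫_B := by
  rw [← star_inner, inner_op_smul_right, star_mul, star_inner]

lemma inner_smul_left_complex {z : ℂ} {x y : G} : ⟪z • x, y⟫_B = star z • ⟪x, y⟫_B := by
  rw [← star_inner, inner_smul_right_complex, star_smul, star_inner]

lemma inner_ofReal_smul_left {r : ℝ} {x y : G} : ⟪(r : ℂ) • x, y⟫_B = r • ⟪x, y⟫_B := by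
  rw [inner_smul_left_complex, Complex.star_def, Complex.conj_ofReal, Complex.coe_smul]

lemma inner_ofReal_smul_right {r : ℝ} {x y : G} : ⟪x, (r : ℂ) • y⟫_B = r • ⟪x, y⟫_B := by
  rw [inner_smul_right_complex, Complex.coe_smul]

lemma norm_sq_eq_norm_inner_self (x : G) : ‖x‖ ^ 2 = ‖⟪x, x⟫_B‖ := by
  rw [norm_eq_sqrt_norm_inner_self (A := B) x, Real.sq_sqrt (norm_nonneg _)]

lemma inner_zero_left {y : G} : ⟪(0 : G), y⟫_B = 0 := by
  simpa using inner_sub_left (B := B) (x := (0 : G)) (y := 0) (z := y)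

end RightCStarModule

lemma norm_inner_apply_self_le_mul_sq {𝓕 : Type*} [FunLike 𝓕 G G] [LinearMapClass 𝓕 ℂ G G]
    (R : 𝓕) {c : ℝ} (hc : ∀ z : G, ‖z‖ ≤ 1 → ‖⟪R z, z⟫_B‖ ≤ c) (z : G) :
    ‖⟪R z, z⟫_B‖ ≤ c * ‖z‖ ^ 2 := by
  rcases eq_or_ne z 0 with rfl | hz
  · simp [RightCStarModule.inner_zero_left]
  have hzn : 0 < ‖z‖ := norm_pos_iff.mpr hz
  have h := hc (((‖z‖⁻¹ : ℝ) : ℂ) • z) <| by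
    rw [norm_smul, Complex.norm_real, norm_inv, norm_norm, inv_mul_cancel₀ hzn.ne']
  rw [map_smul, RightCStarModule.inner_ofReal_smul_left,
    RightCStarModule.inner_ofReal_smul_right, smul_smul, norm_smul, norm_mul, norm_inv,
    norm_norm] at h
  field_simp at h
  linarith

variable [StarOrderedRing B]

lemma RightCStarModule.inner_mul_inner_swap_le (x y : G) :
    ⟪y, x⟫_B * ⟪x, y⟫_B ≤ ‖x‖ ^ 2 • ⟪y, y⟫_B := by
  rcases eq_or_ne x 0 with rfl | hx
  · simp [inner_zero_left]
  set r := ‖x‖ ^ 2 with hr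
  have key (a : B) : 0 ≤ r • (star a * a) - r • (star a * ⟪x, y⟫_B) - r • (⟪y, x⟫_B * a)
      + r • r • ⟪y, y⟫_B :=
    calc 0 ≤ ⟪x <• a - (r : ℂ) • y, x <• a - (r : ℂ) • y⟫_B := inner_self_nonneg
      _ = star a * ⟪x, x⟫_B * a - r • (star a * ⟪x, y⟫_B) - r • (⟪y, x⟫_B * a)
          + r • r • ⟪y, y⟫_B := by
        simp only [inner_sub_left, inner_sub_right, inner_op_smul_left, inner_op_smul_right,
          inner_ofReal_smul_left, inner_ofReal_smul_right, sub_mul, smul_sub,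
          smul_mul_assoc, mul_assoc]
        abel
      _ ≤ _ := by
        gcongr
        rw [hr, norm_sq_eq_norm_inner_self]
        exact CStarAlgebra.star_left_conjugate_le_norm_smul (star_inner x x)
  have h := key ⟪x, y⟫_B
  rw [star_inner, sub_self, zero_sub, neg_add_eq_sub, sub_nonneg] at h
  exact (smul_le_smul_iff_of_pos_left (pow_pos (norm_pos_iff.mpr hx) 2)).mp h

lemma RightCStarModule.norm_inner_le (x y : G) : ‖⟪x, y⟫_B‖ ≤ ‖x‖ * ‖y‖ := by
  refine (pow_le_pow_iff_left₀ (norm_nonneg _) (by positivity) two_ne_zero).mp ?_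
  calc ‖⟪x, y⟫_B‖ ^ 2 = ‖⟪y, x⟫_B * ⟪x, y⟫_B‖ := by
        rw [← star_inner x, CStarRing.norm_star_mul_self, sq]
    _ ≤ ‖‖x‖ ^ 2 • ⟪y, y⟫_B‖ := by
        refine CStarAlgebra.norm_le_norm_of_nonneg_of_le ?_ (inner_mul_inner_swap_le x y)
        rw [← star_inner x]
        exact star_mul_self_nonneg _
    _ = (‖x‖ * ‖y‖) ^ 2 := by
        rw [norm_smul, ← norm_sq_eq_norm_inner_self y, Real.norm_of_nonneg (by positivity),
          mul_pow]

lemma mu_const_le_norm (z : G) : mu (fun _ : Fin 1 => z) ≤ ‖z‖ := by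
  have : Nonempty {y : G // ‖y‖ ≤ 1} := ⟨⟨0, by simp⟩⟩
  refine ciSup_le fun y => ?_
  calc √‖∑ _i : Fin 1, ⟪z, (y : G)⟫_B * ⟪(y : G), z⟫_B‖ = ‖⟪(y : G), z⟫_B‖ := by
        rw [Fin.sum_univ_one, ← RightCStarModule.star_inner (y : G) z,
          CStarRing.norm_star_mul_self, Real.sqrt_mul_self (norm_nonneg _)]
    _ ≤ ‖(y : G)‖ * ‖z‖ := RightCStarModule.norm_inner_le _ _
    _ ≤ ‖z‖ := mul_le_of_le_one_left (norm_nonneg _) y.2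

lemma ofReal_norm_inner_apply_self_le_piOne (R : G → G) {z : G} (hz : ‖z‖ ≤ 1) :
    ENNReal.ofReal ‖⟪R z, z⟫_B‖ ≤ piOne R :=
  le_iSup₂_of_le 1 (fun _ => z) <| le_iSup_of_le ((mu_const_le_norm z).trans hz) <| by
    rw [Fin.sum_univ_one]

lemma two_smul_inner_apply_add_le {𝓕 : Type*} [FunLike 𝓕 G G] [AddMonoidHomClass 𝓕 G G]
    (R : 𝓕) (hR : ∀ x : G, 0 ≤ ⟪R x, x⟫_B) (u v : G) :
    (2 : ℝ) • (⟪R u, v⟫_B + ⟪R v, u⟫_B) ≤ ⟪R (u + v), u + v⟫_B := by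
  have h : ⟪R (u + v), u + v⟫_B - ⟪R (u - v), u - v⟫_B =
      (2 : ℝ) • (⟪R u, v⟫_B + ⟪R v, u⟫_B) := by
    simp only [map_add, map_sub, RightCStarModule.inner_add_left,
      RightCStarModule.inner_add_right, RightCStarModule.inner_sub_left,
      RightCStarModule.inner_sub_right, two_smul]
    abel
  exact h ▸ sub_le_self _ (hR _)

lemma norm_apply_le_of_norm_inner_apply_self_le {𝓕 : Type*} [FunLike 𝓕 G G]
    [LinearMapClass 𝓕 ℂ G G] (R : 𝓕) (hRsa : ∀ x y : G, ⟪R x, y⟫_B = ⟪x, R y⟫_B)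
    (hRpos : ∀ x : G, 0 ≤ ⟪R x, x⟫_B) {c : ℝ} (hc0 : 0 ≤ c)
    (hc : ∀ z : G, ‖⟪R z, z⟫_B‖ ≤ c * ‖z‖ ^ 2) (x : G) :
    ‖R x‖ ≤ c * ‖x‖ := by
  rcases (norm_nonneg (R x)).eq_or_lt with hRx | hRx
  · rw [← hRx]
    positivity
  have hx : 0 < ‖x‖ := norm_pos_iff.mpr fun hx => by simp [hx] at hRx
  set α := ‖R x‖
  set β := ‖x‖
  set u : G := (α : ℂ) • x
  set v : G := (β : ℂ) • R x
  have hs : ⟪R u, v⟫_B + ⟪R v, u⟫_B = (2 * α * β) • ⟪R x, R x⟫_B := by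
    rw [hRsa v u]
    simp only [u, v, map_smul, RightCStarModule.inner_ofReal_smul_left,
      RightCStarModule.inner_ofReal_smul_right]
    module
  have hnorm_u_add_v : ‖u + v‖ ≤ 2 * α * β := by
    refine (norm_add_le u v).trans_eq ?_
    simp only [u, v, α, β, norm_smul, Complex.norm_real, norm_norm]
    ring
  have hs_nonneg : 0 ≤ (2 : ℝ) • (⟪R u, v⟫_B + ⟪R v, u⟫_B) := by
    rw [hs]
    exact smul_nonneg zero_le_two (smul_nonneg (by positivity) RightCStarModule.inner_self_nonneg)
  have key : (4 * α ^ 2 * β) * α ≤ (4 * α ^ 2 * β) * (c * β) :=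
    calc (4 * α ^ 2 * β) * α = ‖(2 : ℝ) • (⟪R u, v⟫_B + ⟪R v, u⟫_B)‖ := by
          rw [hs, smul_smul, norm_smul, ← RightCStarModule.norm_sq_eq_norm_inner_self,
            Real.norm_of_nonneg (by positivity)]
          ring
      _ ≤ ‖⟪R (u + v), u + v⟫_B‖ :=
          CStarAlgebra.norm_le_norm_of_nonneg_of_le hs_nonneg
            (two_smul_inner_apply_add_le R hRpos u v)
      _ ≤ c * ‖u + v‖ ^ 2 := hc _
      _ ≤ c * (2 * α * β) ^ 2 := by gcongr
      _ = (4 * α ^ 2 * β) * (c * β) := by ring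
  exact le_of_mul_le_mul_left key (by positivity)

end

/-- If `T : E → E` is adjointable with modulus `R` (self-adjoint, positive, `R∘R = T*∘T`),
then `‖T‖ ≤ π̃₁(T)`. -/
theorem norm_le_piOne (T : E →L[ℂ] E) (T' : E →L[ℂ] E)
    (hT : ∀ (x y : E), ⟪T x, y⟫_A = ⟪x, T' y⟫_A)
    (R : E →L[ℂ] E)
    (hRsa : ∀ (x y : E), ⟪R x, y⟫_A = ⟪x, R y⟫_A)
    (hRpos : ∀ x : E, 0 ≤ ⟪R x, x⟫_A)
    (hRR : R.comp R = T'.comp T) :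
    ENNReal.ofReal ‖T‖ ≤ piOne (⇑R) := by
  rcases eq_or_ne (piOne ⇑R) ⊤ with htop | htop
  · exact htop ▸ le_top
  set c := (piOne ⇑R).toReal
  have hc0 : 0 ≤ c := ENNReal.toReal_nonneg
  have hball (z : E) (hz : ‖z‖ ≤ 1) : ‖⟪R z, z⟫_A‖ ≤ c :=
    (ENNReal.ofReal_le_iff_le_toReal htop).mp (ofReal_norm_inner_apply_self_le_piOne R hz)
  have hR := norm_apply_le_of_norm_inner_apply_self_le R hRsa hRpos hc0
    (norm_inner_apply_self_le_mul_sq R hball)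
  have hTR (x : E) : ‖T x‖ = ‖R x‖ := by
    have hRRx : T' (T x) = R (R x) := (DFunLike.congr_fun hRR x).symm
    rw [RightCStarModule.norm_eq_sqrt_norm_inner_self (A := A) (T x),
      RightCStarModule.norm_eq_sqrt_norm_inner_self (A := A) (R x), hT, hRRx, hRsa]
  refine ENNReal.ofReal_le_of_le_toReal (T.opNorm_le_bound hc0 fun x => ?_)
  rw [hTR]
  exact hR x
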